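/- Let u_l > u_r and ρ_l, ρ_r > 0, and suppose that for each ε in some interval (0, η) the pair (u*_ε, ρ*_ε) satisfies u_r < u*_ε < u_l, ρ*_ε > max(ρ_l, ρ_r), together with the two equations (u*_ε − u_l)²·(ρ*_ε + ρ_l)/2 = ε·(ρ*_ε − ρ_l)·(p(ρ*_ε) − p(ρ_l)) and (u*_ε − u_r)²·(ρ*_ε + ρ_r)/2 = ε·(ρ*_ε − ρ_r)·(p(ρ*_ε) − p(ρ_r)). Then, as ε → 0⁺, the quantity [ (u_r − u_l)/2 + ε·(p(ρ*_ε) − p(ρ_r))/(u*_ε − u_r) − ε·(p(ρ*_ε) − p(ρ_l))/(u*_ε − u_l) ]·ρ*_ε converges to (1/2)·(u_l − u_r)·(ρ_l + ρ_r). -/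

import Mathlib

/-!
Write `a = u_l − u*_ε`, `b = u*_ε − u_r` and `R = ρ*_ε`, so `a + b = u_l − u_r`. Each jump relation
gives `a², b² ≤ 2ε p(R)`, hence `p(R) ≥ (u_l − u_r)²/(8ε) → ∞` and `R → ∞`. Dividing the two
relations, `(a/b)²` is a product of three ratios of the form `(R ± c)/(R ± d)` or
`(p(R) − c)/(p(R) − d)`, all tending to `1`; so `a/b → 1` and `a, b → (u_l − u_r)/2`. Eliminating
`ε` with the jump relations, the weight equals `b ρ_r R/(R − ρ_r) + a ρ_l R/(R − ρ_l)`, which tends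
to `(u_l − u_r)(ρ_l + ρ_r)/2`.
-/

open Real Filter Topology

/-- The pressure-like function `p(ρ) = ∫₀^ρ ξ·e^ξ dξ`. -/
noncomputable def p (ρ : ℝ) : ℝ := ∫ ξ in (0:ℝ)..ρ, ξ * Real.exp ξ

open Set

lemma p_sub_p_eq_integral (a b : ℝ) : p b - p a = ∫ ξ in a..b, ξ * exp ξ :=
  intervalIntegral.integral_interval_sub_left
    ((by fun_prop : Continuous fun ξ => ξ * exp ξ).intervalIntegrable _ _)
    ((by fun_prop : Continuous fun ξ => ξ * exp ξ).intervalIntegrable _ _)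

lemma p_strictMonoOn : StrictMonoOn p (Ici 0) := by
  intro a ha b _ hab
  have hpos : 0 < ∫ ξ in a..b, ξ * exp ξ :=
    intervalIntegral.intervalIntegral_pos_of_pos_on
      ((by fun_prop : Continuous fun ξ => ξ * exp ξ).intervalIntegrable _ _)
      (fun ξ hξ => mul_pos ((mem_Ici.1 ha).trans_lt hξ.1) (exp_pos ξ)) hab
  linarith [p_sub_p_eq_integral a b]

lemma p_nonneg {ρ : ℝ} (hρ : 0 ≤ ρ) : 0 ≤ p ρ := by
  simpa [p] using p_strictMonoOn.monotoneOn (self_mem_Ici (a := (0:ℝ))) hρ hρ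

lemma sq_le_two_mul_p {ε u u₀ ρ₀ R : ℝ} (hε : 0 ≤ ε) (hρ₀ : 0 ≤ ρ₀) (hR : ρ₀ < R)
    (h : (u - u₀) ^ 2 * (R + ρ₀) / 2 = ε * (R - ρ₀) * (p R - p ρ₀)) :
    (u - u₀) ^ 2 ≤ 2 * ε * p R := by
  have hp : p ρ₀ ≤ p R := p_strictMonoOn.monotoneOn hρ₀ (hρ₀.trans hR.le) hR.le
  have hle : ε * (R - ρ₀) * (p R - p ρ₀) ≤ ε * (R + ρ₀) * p R := by
    have : 0 ≤ R + ρ₀ := by linarith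
    gcongr
    · linarith
    · linarith [p_nonneg hρ₀]
  refine le_of_mul_le_mul_right ?_ (by linarith : 0 < R + ρ₀)
  linarith

structure IsShockSolution (ul ur ρl ρr ε u R : ℝ) : Prop where
  ur_lt : ur < u
  lt_ul : u < ul
  ρl_lt : ρl < R
  ρr_lt : ρr < R
  jump_left : (u - ul) ^ 2 * (R + ρl) / 2 = ε * (R - ρl) * (p R - p ρl)
  jump_right : (u - ur) ^ 2 * (R + ρr) / 2 = ε * (R - ρr) * (p R - p ρr)

namespace IsShockSolution

variable {ul ur ρl ρr ε u R : ℝ}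

lemma sq_sub_le (h : IsShockSolution ul ur ρl ρr ε u R) (hε : 0 ≤ ε) (hρl : 0 ≤ ρl)
    (hρr : 0 ≤ ρr) : (ul - ur) ^ 2 ≤ 8 * ε * p R := by
  nlinarith [sq_le_two_mul_p hε hρl h.ρl_lt h.jump_left,
    sq_le_two_mul_p hε hρr h.ρr_lt h.jump_right, sq_nonneg (2 * u - ul - ur)]

lemma div_sq_eq (h : IsShockSolution ul ur ρl ρr ε u R) (hρl : 0 ≤ ρl) (hρr : 0 ≤ ρr) :
    ((ul - u) / (u - ur)) ^ 2
      = (R - ρl) / (R + ρl) * ((R + ρr) / (R - ρr)) * ((p R - p ρl) / (p R - p ρr)) := by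
  have hu : u - ur ≠ 0 := by linarith [h.ur_lt]
  have hRl : R + ρl ≠ 0 := by linarith [h.ρr_lt]
  have hRr : R - ρr ≠ 0 := by linarith [h.ρr_lt]
  have hp : p R - p ρr ≠ 0 :=
    sub_ne_zero.2 (p_strictMonoOn hρr (hρr.trans h.ρr_lt.le) h.ρr_lt).ne'
  rw [div_pow, div_mul_div_comm, div_mul_div_comm, div_eq_div_iff (by positivity) (by positivity)]
  linear_combination (2 * (R - ρr) * (p R - p ρr)) * h.jump_left
    - (2 * (R - ρl) * (p R - p ρl)) * h.jump_right

lemma weight_eq (h : IsShockSolution ul ur ρl ρr ε u R) :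
    ((ur - ul) / 2 + ε * (p R - p ρr) / (u - ur) - ε * (p R - p ρl) / (u - ul)) * R
      = (u - ur) * ρr * (R / (R - ρr)) + (ul - u) * ρl * (R / (R - ρl)) := by
  have h1 : u - ul ≠ 0 := by linarith [h.lt_ul]
  have h2 : u - ur ≠ 0 := by linarith [h.ur_lt]
  have h3 : R - ρl ≠ 0 := by linarith [h.ρl_lt]
  have h4 : R - ρr ≠ 0 := by linarith [h.ρr_lt]
  have el : ε * (p R - p ρl) = (u - ul) ^ 2 * (R + ρl) / (2 * (R - ρl)) := by
    rw [eq_div_iff (by positivity)]; linear_combination -2 * h.jump_left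
  have er : ε * (p R - p ρr) = (u - ur) ^ 2 * (R + ρr) / (2 * (R - ρr)) := by
    rw [eq_div_iff (by positivity)]; linear_combination -2 * h.jump_right
  rw [el, er]
  field_simp
  ring

end IsShockSolution

section Limits

variable {α : Type*} {l : Filter α}

lemma MonotoneOn.tendsto_atTop_of_comp {β γ : Type*} [LinearOrder β] [Preorder γ] [NoMaxOrder γ]
    {f : β → γ} {g : α → β} {c : β} (hf : MonotoneOn f (Ici c)) (hg : ∀ᶠ x in l, c ≤ g x)
    (h : Tendsto (f ∘ g) l atTop) : Tendsto g l atTop := by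
  rw [tendsto_atTop]
  intro C
  filter_upwards [hg, h.eventually_gt_atTop (f (max C c))] with x hcx hx
  by_contra! hlt
  exact lt_irrefl _ (hx.trans_le (hf hcx (le_max_right C c) (hlt.le.trans (le_max_left C c))))

lemma tendsto_add_div_add_of_tendsto_atTop {f : α → ℝ} (hf : Tendsto f l atTop) (c d : ℝ) :
    Tendsto (fun x => (f x + c) / (f x + d)) l (𝓝 1) := by
  have h : Tendsto (fun x => 1 + (c - d) / (f x + d)) l (𝓝 (1 + 0)) :=
    tendsto_const_nhds.add (tendsto_const_nhds.div_atTop (tendsto_atTop_add_const_right _ d hf))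
  rw [add_zero] at h
  refine h.congr' ?_
  filter_upwards [hf.eventually_gt_atTop (-d)] with x hx
  have : f x + d ≠ 0 := by linarith
  field_simp
  ring

lemma tendsto_of_tendsto_sq {f : α → ℝ} {c : ℝ} (hf : ∀ᶠ x in l, 0 ≤ f x) (hc : 0 ≤ c)
    (h : Tendsto (fun x => f x ^ 2) l (𝓝 (c ^ 2))) : Tendsto f l (𝓝 c) := by
  rw [← sqrt_sq hc]
  refine h.sqrt.congr' ?_
  filter_upwards [hf] with x hx using sqrt_sq hx

lemma tendsto_midpoint_of_div_tendsto_one {u : α → ℝ} {a b : ℝ} (hu : ∀ᶠ x in l, u x ≠ b)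
    (h : Tendsto (fun x => (a - u x) / (u x - b)) l (𝓝 1)) : Tendsto u l (𝓝 ((a + b) / 2)) := by
  have hlim : Tendsto (fun x => b + (a - b) / (1 + (a - u x) / (u x - b))) l
      (𝓝 (b + (a - b) / (1 + 1))) :=
    tendsto_const_nhds.add (tendsto_const_nhds.div (tendsto_const_nhds.add h) (by norm_num))
  rw [show b + (a - b) / (1 + 1) = (a + b) / 2 by ring] at hlim
  refine hlim.congr' ?_
  filter_upwards [hu, h.eventually (lt_mem_nhds zero_lt_one)] with x hx ht
  have hb : u x - b ≠ 0 := sub_ne_zero.2 hx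
  have h1 : 1 + (a - u x) / (u x - b) = (a - b) / (u x - b) := by field_simp; ring
  have hab : a - b ≠ 0 := by
    intro h0; rw [h0, zero_div] at h1; linarith
  rw [h1]
  field_simp
  ring

end Limits

section ShockLimit

variable {ul ur ρl ρr : ℝ} {us ρs : ℝ → ℝ}

lemma tendsto_p_shock_atTop (hu : ur < ul) (hρl : 0 ≤ ρl) (hρr : 0 ≤ ρr)
    (h : ∀ᶠ ε in 𝓝[>] 0, IsShockSolution ul ur ρl ρr ε (us ε) (ρs ε)) :
    Tendsto (fun ε => p (ρs ε)) (𝓝[>] 0) atTop := by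
  refine tendsto_atTop_mono' _ ?_ (tendsto_inv_nhdsGT_zero.const_mul_atTop
    (by positivity : 0 < (ul - ur) ^ 2 / 8))
  filter_upwards [h, self_mem_nhdsWithin] with ε hε (hε0 : 0 < ε)
  rw [← div_eq_mul_inv, div_div, div_le_iff₀ (by positivity)]
  linarith [hε.sq_sub_le hε0.le hρl hρr]

lemma tendsto_shock_ratio (hρl : 0 ≤ ρl) (hρr : 0 ≤ ρr) (hρ : Tendsto ρs (𝓝[>] 0) atTop)
    (hp : Tendsto (fun ε => p (ρs ε)) (𝓝[>] 0) atTop)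
    (h : ∀ᶠ ε in 𝓝[>] 0, IsShockSolution ul ur ρl ρr ε (us ε) (ρs ε)) :
    Tendsto (fun ε => (ul - us ε) / (us ε - ur)) (𝓝[>] 0) (𝓝 1) := by
  refine tendsto_of_tendsto_sq
    (h.mono fun ε hε => div_nonneg (by linarith [hε.lt_ul]) (by linarith [hε.ur_lt]))
    zero_le_one ?_
  have := ((tendsto_add_div_add_of_tendsto_atTop hρ (-ρl) ρl).mul
    (tendsto_add_div_add_of_tendsto_atTop hρ ρr (-ρr))).mul
    (tendsto_add_div_add_of_tendsto_atTop hp (-p ρl) (-p ρr))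
  simp only [← sub_eq_add_neg, mul_one, one_pow] at this ⊢
  exact this.congr' (h.mono fun ε hε => (hε.div_sq_eq hρl hρr).symm)

lemma tendsto_shock_weight (hu : ur < ul) (hρl : 0 ≤ ρl) (hρr : 0 ≤ ρr)
    (h : ∀ᶠ ε in 𝓝[>] 0, IsShockSolution ul ur ρl ρr ε (us ε) (ρs ε)) :
    Tendsto (fun ε =>
        ((ur - ul) / 2 + ε * (p (ρs ε) - p ρr) / (us ε - ur)
          - ε * (p (ρs ε) - p ρl) / (us ε - ul)) * ρs ε)
      (𝓝[>] 0) (𝓝 ((1 / 2) * (ul - ur) * (ρl + ρr))) := by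
  have hp := tendsto_p_shock_atTop hu hρl hρr h
  have hρ : Tendsto ρs (𝓝[>] 0) atTop :=
    p_strictMonoOn.monotoneOn.tendsto_atTop_of_comp (h.mono fun ε hε => hρl.trans hε.ρl_lt.le) hp
  have hus : Tendsto us (𝓝[>] 0) (𝓝 ((ul + ur) / 2)) :=
    tendsto_midpoint_of_div_tendsto_one (h.mono fun ε hε => hε.ur_lt.ne')
      (tendsto_shock_ratio hρl hρr hρ hp h)
  have hfrac (ρ : ℝ) : Tendsto (fun ε => ρs ε / (ρs ε - ρ)) (𝓝[>] 0) (𝓝 1) := by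
    simpa [← sub_eq_add_neg] using tendsto_add_div_add_of_tendsto_atTop hρ 0 (-ρ)
  have hlim := (((hus.sub_const ur).mul_const ρr).mul (hfrac ρr)).add
    (((hus.const_sub ul).mul_const ρl).mul (hfrac ρl))
  convert hlim.congr' (h.mono fun ε hε => hε.weight_eq.symm) using 2
  ring

end ShockLimit

/-- The weight of the delta wave:
`[(u_r − u_l)/2 + ε(p(ρ*_ε) − p(ρ_r))/(u*_ε − u_r) − ε(p(ρ*_ε) − p(ρ_l))/(u*_ε − u_l)]·ρ*_ε`
converges to `(1/2)(u_l − u_r)(ρ_l + ρ_r)` as `ε → 0⁺`. -/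
theorem stmt9 (ul ur ρl ρr η : ℝ) (hu : ur < ul) (hρl : 0 < ρl) (hρr : 0 < ρr)
    (hη : 0 < η) (us ρs : ℝ → ℝ)
    (hmem : ∀ ε ∈ Set.Ioo (0:ℝ) η, ur < us ε ∧ us ε < ul ∧ max ρl ρr < ρs ε)
    (heq1 : ∀ ε ∈ Set.Ioo (0:ℝ) η,
      (us ε - ul) ^ 2 * (ρs ε + ρl) / 2 = ε * (ρs ε - ρl) * (p (ρs ε) - p ρl))
    (heq2 : ∀ ε ∈ Set.Ioo (0:ℝ) η,
      (us ε - ur) ^ 2 * (ρs ε + ρr) / 2 = ε * (ρs ε - ρr) * (p (ρs ε) - p ρr)) :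
    Tendsto (fun ε =>
        ((ur - ul) / 2 + ε * (p (ρs ε) - p ρr) / (us ε - ur)
          - ε * (p (ρs ε) - p ρl) / (us ε - ul)) * ρs ε)
      (𝓝[>] (0:ℝ)) (𝓝 ((1 / 2) * (ul - ur) * (ρl + ρr))) := by
  refine tendsto_shock_weight hu hρl.le hρr.le ?_
  filter_upwards [Ioo_mem_nhdsGT hη] with ε hε
  obtain ⟨h1, h2, h3⟩ := hmem ε hε
  exact ⟨h1, h2, (max_lt_iff.1 h3).1, (max_lt_iff.1 h3).2, heq1 ε hε, heq2 ε hε⟩
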